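/- arXiv:1902.00213 — 3 statements merged into one kernel-verified Lean document; each statement's English description precedes it below -/
import Mathlib

section
/- If a bipartite graph G contains an invertible pair, then the complement of G does not admit a T-free orientation. -/
namespace CocompBigraph

variable {V : Type*}

/-- `side` is a bipartition of the simple graph `G`: edges only join the two sides. -/
def IsBipartition (G : SimpleGraph V) (side : V → Bool) : Prop :=
  ∀ u v, G.Adj u v → side u ≠ side v

/-- Two edges `xy`, `x'y'` (with `x, x'` on one side and `y, y'` on the other) are
independent: they are disjoint and neither `xy'` nor `x'y` is an edge. -/
def Indep (G : SimpleGraph V) (x y x' y' : V) : Prop :=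
  G.Adj x y ∧ G.Adj x' y' ∧ x ≠ x' ∧ y ≠ y' ∧ ¬ G.Adj x y' ∧ ¬ G.Adj x' y

/-- `w` is a walk of length `n` in `G` (vertices `w 0, …, w n`). -/
def IsWalk (G : SimpleGraph V) (n : ℕ) (w : ℕ → V) : Prop :=
  ∀ i < n, G.Adj (w i) (w (i+1))

/-- Two walks of the same length `n`, beginning on the same side, are congruent if
for each `i` their `i`-th edges are independent. -/
def CongWalks (G : SimpleGraph V) (side : V → Bool) (n : ℕ) (w w' : ℕ → V) : Prop :=
  side (w 0) = side (w' 0) ∧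
  IsWalk G n w ∧ IsWalk G n w' ∧
  ∀ i < n, Indep G (w i) (w (i+1)) (w' i) (w' (i+1))

/-- `(a,b) Γ (f,g)`: there are congruent walks from `a` to `f` and from `b` to `g`. -/
def Gamma (G : SimpleGraph V) (side : V → Bool) (a b f g : V) : Prop :=
  ∃ n, ∃ w w' : ℕ → V, CongWalks G side n w w' ∧
    w 0 = a ∧ w' 0 = b ∧ w n = f ∧ w' n = g

/-- A pair of distinct vertices `u, v` is invertible if there are congruent walks
from `u` to `v` and from `v` to `u`. -/
def InvertiblePair (G : SimpleGraph V) (side : V → Bool) (u v : V) : Prop :=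
  u ≠ v ∧ Gamma G side u v v u

/-- A pair `(a,b)` is relevant if its implication class contains at least two pairs. -/
def Relevant (G : SimpleGraph V) (side : V → Bool) (a b : V) : Prop :=
  ∃ f g, Gamma G side a b f g ∧ (f, g) ≠ (a, b)

/-- An orientation of the complement of `G`: every pair of distinct vertices on the
same side gets exactly one direction (cross pairs stay undirected). -/
def IsOrientation (side : V → Bool) (O : V → V → Prop) : Prop :=
  (∀ u v, O u v → side u = side v ∧ u ≠ v) ∧
  (∀ u v, u ≠ v → side u = side v → (O u v ↔ ¬ O v u))

/-- The orientation `O` is `T`-free: no two independent edges of the bipartite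
complement agree in `O`. -/
def TFree (G : SimpleGraph V) (side : V → Bool) (O : V → V → Prop) : Prop :=
  ∀ x y x' y', side x = side x' → side y = side y' → side x ≠ side y →
    x ≠ x' → y ≠ y' → ¬ G.Adj x y → ¬ G.Adj x' y' →
    G.Adj x y' → G.Adj x' y → ¬ (O x x' ∧ O y y')

/-- The relation `O` has no directed cycle. -/
def OAcyclic (O : V → V → Prop) : Prop :=
  ∀ (n : ℕ) (w : ℕ → V), 0 < n → (∀ i < n, O (w i) (w (i+1))) → w 0 ≠ w n

/-- `G` has an `S`-free pair of orderings: linear orders of the two sides such that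
no two independent edges cross. -/
def SFreePair (G : SimpleGraph V) (side : V → Bool) : Prop :=
  ∃ lt : V → V → Prop,
    (∀ u v, lt u v → side u = side v ∧ u ≠ v) ∧
    (∀ u v, u ≠ v → side u = side v → (lt u v ↔ ¬ lt v u)) ∧
    (∀ u v w, lt u v → lt v w → lt u w) ∧
    (∀ u v w z, side u ≠ side w → lt u v → lt w z →
      G.Adj u z → G.Adj v w → (G.Adj u w ∨ G.Adj v z))

/-- An edge-asteroid: `2k+1` distinct edges `x i — y i` such that for each `i` there
is a walk joining the edges `e (i+k)` and `e (i+k+1)` (including both endpoints of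
each) containing no vertex adjacent to either end of `e i`. -/
def EdgeAsteroid (G : SimpleGraph V) (k : ℕ) (x y : ZMod (2*k+1) → V) : Prop :=
  1 ≤ k ∧
  (∀ i, G.Adj (x i) (y i)) ∧
  (∀ i j : ZMod (2*k+1), i ≠ j → (x i, y i) ≠ (x j, y j)) ∧
  ∀ i : ZMod (2*k+1), ∃ n, ∃ w : ℕ → V, IsWalk G n w ∧ 1 ≤ n ∧
    ((w 0 = x (i+k) ∧ w 1 = y (i+k)) ∨ (w 0 = y (i+k) ∧ w 1 = x (i+k))) ∧
    ((w (n-1) = y (i+k+1) ∧ w n = x (i+k+1)) ∨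
      (w (n-1) = x (i+k+1) ∧ w n = y (i+k+1))) ∧
    ∀ j ≤ n, ¬ G.Adj (w j) (x i) ∧ ¬ G.Adj (w j) (y i)

/-- An asteroid in a graph `H`: `2k+1` distinct vertices such that for each `i` there
is a path joining `v (i+k)` and `v (i+k+1)` none of whose vertices is a neighbour
of `v i`. -/
def Asteroid {W : Type*} (H : SimpleGraph W) (k : ℕ) (v : ZMod (2*k+1) → W) : Prop :=
  1 ≤ k ∧ Function.Injective v ∧
  ∀ i : ZMod (2*k+1), ∃ n, ∃ w : ℕ → W, IsWalk H n w ∧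
    w 0 = v (i+k) ∧ w n = v (i+(k+1)) ∧
    (∀ a ≤ n, ∀ b ≤ n, w a = w b → a = b) ∧
    ∀ j ≤ n, ¬ H.Adj (w j) (v i)

/-- The independence graph `I(G)`: vertices are the edges of `G` (oriented from side
`true` to side `false`), adjacent iff independent. -/
def IndepGraph (G : SimpleGraph V) (side : V → Bool) :
    SimpleGraph {p : V × V // G.Adj p.1 p.2 ∧ side p.1 = true} where
  Adj e f := Indep G e.1.1 e.1.2 f.1.1 f.1.2
  symm := by
    refine ⟨?_⟩
    rintro e f ⟨h1, h2, h3, h4, h5, h6⟩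
    exact ⟨h2, h1, h3.symm, h4.symm, h6, h5⟩
  loopless := by
    refine ⟨?_⟩
    rintro e ⟨_, _, h3, _⟩
    exact h3 rfl

/-- A graph is a comparability graph iff it has a transitive orientation. -/
def HasTransitiveOrientation {W : Type*} (H : SimpleGraph W) : Prop :=
  ∃ r : W → W → Prop,
    (∀ u v, r u v → H.Adj u v) ∧
    (∀ u v, H.Adj u v → (r u v ↔ ¬ r v u)) ∧
    (∀ u v w, r u v → r v w → r u w)

/-- The cycle `C_n` on vertex set `ZMod n`. -/
def cycleGraph (n : ℕ) : SimpleGraph (ZMod n) where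
  Adj i j := i ≠ j ∧ (j = i + 1 ∨ i = j + 1)
  symm := by refine ⟨?_⟩; rintro i j ⟨h, h'⟩; exact ⟨h.symm, h'.symm⟩
  loopless := by refine ⟨?_⟩; rintro i ⟨h, _⟩; exact h rfl

/-- `G` contains an induced cycle of length `n`. -/
def HasInducedCycle (G : SimpleGraph V) (n : ℕ) : Prop :=
  ∃ f : ZMod n → V, Function.Injective f ∧
    ∀ i j, G.Adj (f i) (f j) ↔ (cycleGraph n).Adj i j

/-- Adjacency of the auxiliary graph `G⁺` on ordered pairs:
`(u,v)` is adjacent to `(v,u)` and to every `(z,w)` such that `uw` and `vz` are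
independent edges of `G`. -/
def AuxAdj (G : SimpleGraph V) (p q : V × V) : Prop :=
  (q.1 = p.2 ∧ q.2 = p.1) ∨
  (G.Adj p.1 q.2 ∧ G.Adj p.2 q.1 ∧ p.1 ≠ p.2 ∧ q.1 ≠ q.2 ∧
    ¬ G.Adj p.1 q.1 ∧ ¬ G.Adj p.2 q.2)

/-- The auxiliary graph `G⁺`, on the set `F` of ordered pairs of distinct same-side
vertices, is bipartite (i.e. properly 2-colourable). -/
def AuxBipartite (G : SimpleGraph V) (side : V → Bool) : Prop :=
  ∃ c : {p : V × V // p.1 ≠ p.2 ∧ side p.1 = side p.2} → Bool,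
    ∀ p q, AuxAdj G p.1 q.1 → c p ≠ c q

/-- `G` is an interval containment bigraph. -/
def IntervalContainment (G : SimpleGraph V) (side : V → Bool) : Prop :=
  ∃ l r : V → ℝ, (∀ v, l v ≤ r v) ∧
    ∀ x y, side x = true → side y = false →
      (G.Adj x y ↔ (l x ≤ l y ∧ r y ≤ r x))

theorem Indep.symm {G : SimpleGraph V} {x y x' y' : V} (h : Indep G x y x' y') :
    Indep G x' y' x y :=
  let ⟨hxy, hxy', hx, hy, hnxy', hnx'y⟩ := h
  ⟨hxy', hxy, hx.symm, hy.symm, hnx'y, hnxy'⟩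

theorem CongWalks.symm {G : SimpleGraph V} {side : V → Bool} {n : ℕ} {w w' : ℕ → V}
    (h : CongWalks G side n w w') : CongWalks G side n w' w :=
  let ⟨hside, hw, hw', hind⟩ := h
  ⟨hside.symm, hw', hw, fun i hi => (hind i hi).symm⟩

theorem Gamma.symm {G : SimpleGraph V} {side : V → Bool} {a b f g : V}
    (h : Gamma G side a b f g) : Gamma G side b a g f :=
  let ⟨n, w, w', hcong, ha, hb, hf, hg⟩ := h
  ⟨n, w', w, hcong.symm, hb, ha, hg, hf⟩

section TFree

variable {G : SimpleGraph V} {side : V → Bool} {O : V → V → Prop}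

/-- The heart of the argument: the edges `xy'` and `x'y` of the bipartite complement are
independent, so `x → x'` forbids `y' → y`. -/
theorem TFree.orient_of_indep (hbip : IsBipartition G side) (hO : IsOrientation side O)
    (hT : TFree G side O) {x y x' y' : V} (hind : Indep G x y x' y') (hxx' : O x x') :
    O y y' := by
  obtain ⟨hxy, hx'y', -, hyy', hnxy', hnx'y⟩ := hind
  have hsx : side x = side x' := (hO.1 x x' hxx').1
  have hsy : side y = side y' := by
    rw [Bool.eq_not_of_ne (hbip _ _ hxy).symm, Bool.eq_not_of_ne (hbip _ _ hx'y').symm, hsx]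
  have hsxy' : side x ≠ side y' := hsy ▸ hbip _ _ hxy
  refine (hO.2 y y' hyy' hsy).mpr fun hy'y => ?_
  exact hT x y' x' y hsx hsy.symm hsxy' (hO.1 x x' hxx').2 hyy'.symm hnxy' hnx'y hxy hx'y'
    ⟨hxx', hy'y⟩

theorem TFree.orient_of_gamma (hbip : IsBipartition G side) (hO : IsOrientation side O)
    (hT : TFree G side O) {a b f g : V} (hΓ : Gamma G side a b f g) (hab : O a b) :
    O f g := by
  obtain ⟨n, w, w', ⟨-, -, -, hind⟩, rfl, rfl, rfl, rfl⟩ := hΓ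
  suffices ∀ i ≤ n, O (w i) (w' i) from this n le_rfl
  intro i hi
  induction i with
  | zero => exact hab
  | succ i ih => exact hT.orient_of_indep hbip hO (hind i hi) (ih (Nat.le_of_succ_le hi))

end TFree

/-- if `G` contains an invertible pair, then the complement of `G`
has no `T`-free orientation. -/
theorem stmt_2 (G : SimpleGraph V) (side : V → Bool) (hbip : IsBipartition G side)
    (h : ∃ u v, InvertiblePair G side u v) :
    ¬ ∃ O : V → V → Prop, IsOrientation side O ∧ TFree G side O := by
  rintro ⟨O, hO, hT⟩
  obtain ⟨u, v, huv, hΓ⟩ := h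
  have hside : side u = side v := by
    obtain ⟨n, w, w', ⟨hside, -⟩, rfl, rfl, -⟩ := hΓ
    exact hside
  have hflip : O u v ↔ O v u :=
    ⟨hT.orient_of_gamma hbip hO hΓ, hT.orient_of_gamma hbip hO hΓ.symm⟩
  have hanti : O u v ↔ ¬ O v u := hO.2 u v huv hside
  tauto

end CocompBigraph
end

section
/- A bipartite graph G contains an edge-asteroid if and only if the complement of its independence graph I(G) contains an asteroid. -/
/-!
In a bipartite graph two edges are independent exactly when no end of one is adjacent to an end
of the other. So the vertices of `I(G)ᶜ` outside the closed neighbourhood of `e` are the edges of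
`G` with both ends in `awayFrom G e`, the set of vertices adjacent to no end of `e`. The edges of a
walk of `G` inside `awayFrom G e` form a walk of `I(G)ᶜ` among these, as consecutive edges share a
vertex and so are not independent. Conversely, two edges adjacent in `I(G)ᶜ` share an end or are
joined by an edge of `G`, so a walk of `I(G)ᶜ` among these edges yields a walk of `G` inside
`awayFrom G e`. Hence the walks required of an edge-asteroid and of an asteroid of `I(G)ᶜ`
translate into each other.
-/

namespace CocompBigraph

variable {V : Type*}

open SimpleGraph

section InducedWalks

variable {W : Type*} {H : SimpleGraph W} {s : Set W}

lemma isWalk_val_getVert {a b : s} (p : (H.induce s).Walk a b) :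
    IsWalk H p.length (fun j => (p.getVert j : W)) :=
  fun _ hj => p.adj_getVert_succ hj

lemma IsWalk.ne_of_forall_not_adj {n : ℕ} {w : ℕ → W} {c : W} (hw : IsWalk H n w)
    (h0 : w 0 ≠ c) (h : ∀ j ≤ n, ¬ H.Adj (w j) c) : ∀ j ≤ n, w j ≠ c
  | 0, _ => h0
  | j + 1, hj => fun hc => h j (by omega) (hc ▸ hw j (by omega))

lemma IsWalk.reachable_induce {n : ℕ} {w : ℕ → W} (hw : IsWalk H n w)
    (hs : ∀ j ≤ n, w j ∈ s) :
    (H.induce s).Reachable ⟨w 0, hs 0 n.zero_le⟩ ⟨w n, hs n le_rfl⟩ := by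
  induction n with
  | zero => rfl
  | succ n ih =>
    exact (ih (fun j hj => hw j (by omega)) (fun j hj => hs j (by omega))).trans
      (Adj.reachable (hw n n.lt_succ_self))

lemma exists_injective_isWalk_of_reachable_induce {a b : s}
    (h : (H.induce s).Reachable a b) :
    ∃ n w, IsWalk H n w ∧ w 0 = a ∧ w n = b ∧ (∀ i ≤ n, ∀ j ≤ n, w i = w j → i = j) ∧
      ∀ j ≤ n, w j ∈ s := by
  classical
  obtain ⟨p⟩ := h
  refine ⟨p.bypass.length, fun j => p.bypass.getVert j, isWalk_val_getVert _, by simp, by simp,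
    fun i hi j hj hij => p.bypass_isPath.getVert_injOn hi hj (Subtype.val_injective hij),
    fun j _ => (p.bypass.getVert j).2⟩

lemma exists_isWalk_of_reachable_induce {x x' y y' : W} {hx : x ∈ s} {hx' : x' ∈ s}
    (hy : y ∈ s) (hy' : y' ∈ s) (h : H.Adj y x) (h' : H.Adj x' y')
    (hr : (H.induce s).Reachable ⟨x, hx⟩ ⟨x', hx'⟩) :
    ∃ n w, IsWalk H n w ∧ 1 ≤ n ∧ w 0 = y ∧ w 1 = x ∧ w (n - 1) = x' ∧ w n = y' ∧
      ∀ j ≤ n, w j ∈ s := by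
  obtain ⟨q⟩ := hr
  let p : (H.induce s).Walk ⟨y, hy⟩ ⟨y', hy'⟩ :=
    .cons (show (H.induce s).Adj ⟨y, hy⟩ ⟨x, hx⟩ from h)
      (q.concat (show (H.induce s).Adj ⟨x', hx'⟩ ⟨y', hy'⟩ from h'))
  refine ⟨p.length, fun j => p.getVert j, isWalk_val_getVert p, by simp [p], by simp,
    by simp [p], ?_, by simp, fun j _ => (p.getVert j).2⟩
  change (p.penultimate : W) = x'
  rw [Walk.penultimate_cons_of_not_nil _ _ (by simp [← Walk.length_eq_zero_iff])]
  simp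

end InducedWalks

abbrev OrientedEdge (G : SimpleGraph V) (side : V → Bool) : Type _ :=
  {p : V × V // G.Adj p.1 p.2 ∧ side p.1 = true}

def awayFrom (G : SimpleGraph V) (p : V × V) : Set V :=
  {u | ¬ G.Adj u p.1 ∧ ¬ G.Adj u p.2}

namespace IsBipartition

variable {G : SimpleGraph V} {side : V → Bool} (hbip : IsBipartition G side)
include hbip

lemma side_snd (e : OrientedEdge G side) : side e.1.2 = false := by
  simpa [e.2.2] using (hbip _ _ e.2.1).symm

lemma exists_orientedEdge {a b : V} (h : G.Adj a b) :
    ∃ e : OrientedEdge G side, s(e.1.1, e.1.2) = s(a, b) := by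
  by_cases ha : side a = true
  · exact ⟨⟨(a, b), h, ha⟩, rfl⟩
  · exact ⟨⟨(b, a), h.symm, by simpa [ha] using hbip a b h⟩, Sym2.eq_swap⟩

lemma indepGraph_adj_iff {e f : OrientedEdge G side} :
    (IndepGraph G side).Adj e f ↔ ∀ u ∈ s(f.1.1, f.1.2), u ∈ awayFrom G e.1 := by
  have hy := (hbip.side_snd f).trans (hbip.side_snd e).symm
  rw [Sym2.forall_mem_pair]
  constructor
  · rintro ⟨-, -, -, -, hxy, hyx⟩
    exact ⟨⟨fun h => hbip _ _ h (f.2.2.trans e.2.2.symm), hyx⟩,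
      ⟨fun h => hxy h.symm, fun h => hbip _ _ h hy⟩⟩
  · rintro ⟨⟨-, hyx⟩, hxy, -⟩
    refine ⟨e.2.1, f.2.1, fun h => hyx ?_, fun h => hxy ?_, fun h => hxy h.symm, hyx⟩
    · rw [← h]; exact e.2.1
    · rw [← h]; exact e.2.1.symm

lemma mem_awayFrom_of_adj {e f : OrientedEdge G side} (h : (IndepGraph G side).Adj e f)
    {u : V} (hu : u ∈ s(f.1.1, f.1.2)) : u ∈ awayFrom G e.1 :=
  hbip.indepGraph_adj_iff.1 h u hu

lemma not_indepGraph_adj_of_mem {e f : OrientedEdge G side} {u : V}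
    (he : u ∈ s(e.1.1, e.1.2)) (hf : u ∈ s(f.1.1, f.1.2)) :
    ¬ (IndepGraph G side).Adj e f := by
  have := e.2.2
  have := f.2.2
  have := hbip.side_snd e
  have := hbip.side_snd f
  rintro ⟨-, -, hx, hy, -, -⟩
  rw [Sym2.mem_iff] at he hf
  rcases he with rfl | rfl <;> rcases hf with h | h <;> simp_all

lemma reachable_compl_induce_of_mem {S : Set (OrientedEdge G side)} {f g : S} {u : V}
    (hf : u ∈ s(f.1.1.1, f.1.1.2)) (hg : u ∈ s(g.1.1.1, g.1.1.2)) :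
    ((IndepGraph G side)ᶜ.induce S).Reachable f g := by
  by_cases hfg : f = g
  · rw [hfg]
  · exact Adj.reachable ⟨fun h => hfg (Subtype.ext h), hbip.not_indepGraph_adj_of_mem hf hg⟩

lemma reachable_compl_induce_of_isWalk {e : OrientedEdge G side} {n : ℕ} {w : ℕ → V}
    (hw : IsWalk G n w) (hA : ∀ j ≤ n, w j ∈ awayFrom G e.1)
    {f : (IndepGraph G side).neighborSet e} (hf : w 0 ∈ s(f.1.1.1, f.1.1.2)) :
    ∀ j ≤ n, ∀ g : (IndepGraph G side).neighborSet e, w j ∈ s(g.1.1.1, g.1.1.2) →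
      ((IndepGraph G side)ᶜ.induce ((IndepGraph G side).neighborSet e)).Reachable f g
  | 0, _, g, hg => hbip.reachable_compl_induce_of_mem hf hg
  | j + 1, hj, g, hg => by
    obtain ⟨d, hd⟩ := hbip.exists_orientedEdge (hw j (by omega))
    have hdS : d ∈ (IndepGraph G side).neighborSet e := by
      rw [mem_neighborSet, hbip.indepGraph_adj_iff, hd, Sym2.forall_mem_pair]
      exact ⟨hA j (by omega), hA (j + 1) hj⟩
    have hwj : w j ∈ s(d.1.1, d.1.2) := hd ▸ Sym2.mem_mk_left _ _
    have hwj' : w (j + 1) ∈ s(d.1.1, d.1.2) := hd ▸ Sym2.mem_mk_right _ _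
    exact (reachable_compl_induce_of_isWalk hw hA hf j (by omega) ⟨d, hdS⟩ hwj).trans
      (hbip.reachable_compl_induce_of_mem (f := ⟨d, hdS⟩) hwj' hg)

lemma reachable_induce_fst_of_not_adj {e f g : OrientedEdge G side}
    (hf : (IndepGraph G side).Adj e f) (hg : (IndepGraph G side).Adj e g)
    (hfg : ¬ (IndepGraph G side).Adj f g) :
    (G.induce (awayFrom G e.1)).Reachable
      ⟨f.1.1, hbip.mem_awayFrom_of_adj hf (Sym2.mem_mk_left _ _)⟩
      ⟨g.1.1, hbip.mem_awayFrom_of_adj hg (Sym2.mem_mk_left _ _)⟩ := by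
  have step {a b : V} (ha : a ∈ awayFrom G e.1) (hb : b ∈ awayFrom G e.1)
      (h : a = b ∨ G.Adj a b) : (G.induce (awayFrom G e.1)).Reachable ⟨a, ha⟩ ⟨b, hb⟩ := by
    rcases h with rfl | h
    exacts [.rfl, Adj.reachable h]
  have hfx := hbip.mem_awayFrom_of_adj hf (Sym2.mem_mk_left _ _)
  have hgx := hbip.mem_awayFrom_of_adj hg (Sym2.mem_mk_left _ _)
  have hfy := hbip.mem_awayFrom_of_adj hf (Sym2.mem_mk_right _ _)
  have hgy := hbip.mem_awayFrom_of_adj hg (Sym2.mem_mk_right _ _)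
  have hf' := step hfx hfy (.inr f.2.1)
  have hg' := step hgy hgx (.inr g.2.1.symm)
  by_cases hx : f.1.1 = g.1.1
  · exact step hfx hgx (.inl hx)
  by_cases hy : f.1.2 = g.1.2
  · exact hf'.trans ((step hfy hgy (.inl hy)).trans hg')
  by_cases hxy : G.Adj f.1.1 g.1.2
  · exact (step hfx hgy (.inr hxy)).trans hg'
  have hyx : G.Adj g.1.1 f.1.2 := by
    by_contra hyx
    exact hfg ⟨f.2.1, g.2.1, hx, hy, hxy, hyx⟩
  exact hf'.trans (step hfy hgx (.inr hyx.symm))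

lemma reachable_induce_fst_of_reachable {e : OrientedEdge G side}
    {f g : (IndepGraph G side).neighborSet e}
    (h : ((IndepGraph G side)ᶜ.induce ((IndepGraph G side).neighborSet e)).Reachable f g) :
    (G.induce (awayFrom G e.1)).Reachable
      ⟨f.1.1.1, hbip.mem_awayFrom_of_adj f.2 (Sym2.mem_mk_left _ _)⟩
      ⟨g.1.1.1, hbip.mem_awayFrom_of_adj g.2 (Sym2.mem_mk_left _ _)⟩ := by
  obtain ⟨p⟩ := h
  induction p with
  | nil => rfl
  | @cons u v _ hadj _ ih =>
    exact (hbip.reachable_induce_fst_of_not_adj u.2 v.2 hadj.2).trans ih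

lemma exists_compl_path_of_isWalk {e f f' : OrientedEdge G side}
    {n : ℕ} {w : ℕ → V} (hw : IsWalk G n w) (hn : 1 ≤ n)
    (h0 : (w 0 = f.1.1 ∧ w 1 = f.1.2) ∨ (w 0 = f.1.2 ∧ w 1 = f.1.1))
    (hn' : (w (n-1) = f'.1.2 ∧ w n = f'.1.1) ∨ (w (n-1) = f'.1.1 ∧ w n = f'.1.2))
    (hA : ∀ j ≤ n, ¬ G.Adj (w j) e.1.1 ∧ ¬ G.Adj (w j) e.1.2) :
    ∃ m, ∃ p : ℕ → OrientedEdge G side, IsWalk (IndepGraph G side)ᶜ m p ∧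
      p 0 = f ∧ p m = f' ∧ (∀ a ≤ m, ∀ b ≤ m, p a = p b → a = b) ∧
      ∀ j ≤ m, ¬ (IndepGraph G side)ᶜ.Adj (p j) e := by
  have adj_of_eq {g : OrientedEdge G side} {a b : V} (ha : a ∈ awayFrom G e.1)
      (hb : b ∈ awayFrom G e.1) (h : s(a, b) = s(g.1.1, g.1.2)) : (IndepGraph G side).Adj e g := by
    rw [hbip.indepGraph_adj_iff, ← h, Sym2.forall_mem_pair]
    exact ⟨ha, hb⟩
  have hf0 : s(w 0, w 1) = s(f.1.1, f.1.2) := Sym2.eq_iff.2 h0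
  have hfn : s(w n, w (n-1)) = s(f'.1.1, f'.1.2) := Sym2.eq_iff.2 (by tauto)
  have hf := adj_of_eq (hA 0 (by omega)) (hA 1 hn) hf0
  have hf' := adj_of_eq (hA n le_rfl) (hA (n-1) (by omega)) hfn
  obtain ⟨m, p, hp, hp0, hpm, hinj, hpS⟩ := exists_injective_isWalk_of_reachable_induce
    (hbip.reachable_compl_induce_of_isWalk hw hA (f := ⟨f, hf⟩) (hf0 ▸ Sym2.mem_mk_left _ _)
      n le_rfl ⟨f', hf'⟩ (hfn ▸ Sym2.mem_mk_left _ _))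
  exact ⟨m, p, hp, hp0, hpm, hinj, fun j hj h => h.2 (hpS j hj).symm⟩

lemma exists_isWalk_of_compl_path {e f f' : OrientedEdge G side}
    {n : ℕ} {p : ℕ → OrientedEdge G side} (hp : IsWalk (IndepGraph G side)ᶜ n p)
    (h0 : p 0 = f) (hn : p n = f') (hfe : f ≠ e)
    (havoid : ∀ j ≤ n, ¬ (IndepGraph G side)ᶜ.Adj (p j) e) :
    ∃ m w, IsWalk G m w ∧ 1 ≤ m ∧
      ((w 0 = f.1.1 ∧ w 1 = f.1.2) ∨ (w 0 = f.1.2 ∧ w 1 = f.1.1)) ∧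
      ((w (m-1) = f'.1.2 ∧ w m = f'.1.1) ∨ (w (m-1) = f'.1.1 ∧ w m = f'.1.2)) ∧
      ∀ j ≤ m, ¬ G.Adj (w j) e.1.1 ∧ ¬ G.Adj (w j) e.1.2 := by
  have hne := hp.ne_of_forall_not_adj (h0 ▸ hfe) havoid
  have hS : ∀ j ≤ n, p j ∈ (IndepGraph G side).neighborSet e := fun j hj =>
    (not_not.1 fun h => havoid j hj ⟨hne j hj, h⟩).symm
  subst h0 hn
  obtain ⟨m, w, hw, hm, hw0, hw1, hwm', hwm, hA⟩ := exists_isWalk_of_reachable_induce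
    (hbip.mem_awayFrom_of_adj (hS 0 n.zero_le) (Sym2.mem_mk_right _ _))
    (hbip.mem_awayFrom_of_adj (hS n le_rfl) (Sym2.mem_mk_right _ _))
    (p 0).2.1.symm (p n).2.1 (hbip.reachable_induce_fst_of_reachable (hp.reachable_induce hS))
  exact ⟨m, w, hw, hm, .inr ⟨hw0, hw1⟩, .inr ⟨hwm', hwm⟩, hA⟩

end IsBipartition

lemma natCast_ne_zero_zmod {k : ℕ} (hk : 1 ≤ k) : (k : ZMod (2 * k + 1)) ≠ 0 := by
  rw [Ne, ZMod.natCast_eq_zero_iff]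
  exact fun h => absurd (Nat.le_of_dvd (by omega) h) (by omega)

/-- `G` contains an edge-asteroid iff the complement of its
independence graph `I(G)` contains an asteroid. -/
theorem stmt_4 (G : SimpleGraph V) (side : V → Bool) (hbip : IsBipartition G side) :
    (∃ k, ∃ x y : ZMod (2*k+1) → V, (∀ i, side (x i) = true) ∧ EdgeAsteroid G k x y)
      ↔
    (∃ k, ∃ v : ZMod (2*k+1) → {p : V × V // G.Adj p.1 p.2 ∧ side p.1 = true},
      Asteroid (IndepGraph G side)ᶜ k v) := by
  constructor
  · rintro ⟨k, x, y, hx, hk, hxy, hinj, hwalks⟩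
    refine ⟨k, fun i => ⟨(x i, y i), hxy i, hx i⟩, hk, fun i j hij => ?_, fun i => ?_⟩
    · by_contra hne
      exact hinj i j hne (congrArg Subtype.val hij)
    · obtain ⟨n, w, hw, hn, h0, hn', hA⟩ := hwalks i
      rw [← add_assoc]
      exact hbip.exists_compl_path_of_isWalk hw hn h0 hn' hA
  · rintro ⟨k, v, hk, hinj, hpaths⟩
    refine ⟨k, fun i => (v i).1.1, fun i => (v i).1.2, fun i => (v i).2.2, hk,
      fun i => (v i).2.1, fun i j hij h => hij (hinj (Subtype.ext h)), fun i => ?_⟩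
    obtain ⟨n, p, hp, h0, hn, -, havoid⟩ := hpaths i
    rw [← add_assoc] at hn
    exact hbip.exists_isWalk_of_compl_path hp h0 hn
      (hinj.ne (by simpa using natCast_ne_zero_zmod hk)) havoid

end CocompBigraph
end

section
/- If the independence graph I(G) of a bipartite graph G is a comparability graph, then the complement of G has a T-free orientation. -/
/-! A transitive orientation `r` of `I(G)` induces a relation on vertices: `u` precedes `v`
when an edge at `u` lies below, in `r`, an edge at `v`, with `u` and `v` in the same position.
This relation is asymmetric, so the complement of `G` can be oriented along it (ties broken by
a well-order). Two agreeing independent edges `xy`, `x'y'` of the complement would then make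
`xy'`, `x'y` independent edges of `G` that `r` can orient in neither direction. -/

namespace CocompBigraph

variable {V : Type*}

theorem Indep.flip {G : SimpleGraph V} {x y x' y' : V} (h : Indep G x y x' y') :
    Indep G y x y' x' :=
  ⟨h.1.symm, h.2.1.symm, h.2.2.2.1, h.2.2.1, fun h' => h.2.2.2.2.2 h'.symm,
    fun h' => h.2.2.2.2.1 h'.symm⟩

/-- `f₁` and `f₂` are independent, hence comparable, and transitivity then relates two edges
sharing an `a`-end, which are not independent. -/
theorem false_of_rel_of_rel_swap {G : SimpleGraph V} {E : Type*} (a b : E → V)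
    {r : E → E → Prop} (hind : ∀ e f, r e f → Indep G (a e) (b e) (a f) (b f))
    (htotal : ∀ e f, Indep G (a e) (b e) (a f) (b f) → r e f ∨ r f e)
    (htrans : ∀ e f g, r e f → r f g → r e g) {e₁ f₁ e₂ f₂ : E}
    (h₁ : r e₁ f₁) (h₂ : r e₂ f₂) (hu : a e₁ = a f₂) (hv : a f₁ = a e₂) : False := by
  obtain ⟨-, hf₁, huv, -, hub, -⟩ := hind e₁ f₁ h₁
  obtain ⟨-, hf₂, -, -, hvb, -⟩ := hind e₂ f₂ h₂
  rw [hu] at hub huv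
  rw [← hv] at hvb
  have hf : Indep G (a f₁) (b f₁) (a f₂) (b f₂) :=
    ⟨hf₁, hf₂, huv.symm, fun h => hub (h ▸ hf₂), hvb, hub⟩
  rcases htotal f₁ f₂ hf with h | h
  · exact (hind e₁ f₂ (htrans _ _ _ h₁ h)).2.2.1 hu
  · exact (hind e₂ f₁ (htrans _ _ _ h₂ h)).2.2.1 hv.symm

abbrev Edge (G : SimpleGraph V) (side : V → Bool) : Type _ :=
  {p : V × V // G.Adj p.1 p.2 ∧ side p.1 = true}

/-- The guard `side u = false` keeps the two clauses apart, since first ends lie on side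
`true`. -/
def endRel {G : SimpleGraph V} {side : V → Bool} (r : Edge G side → Edge G side → Prop)
    (u v : V) : Prop :=
  ∃ e f, r e f ∧ (e.1.1 = u ∧ f.1.1 = v ∨ side u = false ∧ e.1.2 = u ∧ f.1.2 = v)

theorem endRel_asymm {G : SimpleGraph V} {side : V → Bool} {r : Edge G side → Edge G side → Prop}
    (hr : ∀ e f, r e f → (IndepGraph G side).Adj e f)
    (htotal : ∀ e f, (IndepGraph G side).Adj e f → r e f ∨ r f e)
    (htrans : ∀ e f g, r e f → r f g → r e g) {u v : V} (huv : endRel r u v) :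
    ¬ endRel r v u := by
  rintro ⟨e₂, f₂, h₂, ⟨hv₂, hu₂⟩ | ⟨hv, hv₂, hu₂⟩⟩ <;>
    obtain ⟨e₁, f₁, h₁, ⟨hu₁, hv₁⟩ | ⟨hu, hu₁, hv₁⟩⟩ := huv
  · exact false_of_rel_of_rel_swap (fun e : Edge G side => e.1.1) (fun e => e.1.2) hr htotal
      htrans h₁ h₂ (hu₁.trans hu₂.symm) (hv₁.trans hv₂.symm)
  · exact Bool.false_ne_true (hu ▸ hu₂ ▸ f₂.2.2)
  · exact Bool.false_ne_true (hv ▸ hv₁ ▸ f₁.2.2)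
  · exact false_of_rel_of_rel_swap (fun e : Edge G side => e.1.2) (fun e => e.1.1)
      (fun e f hef => (hr e f hef).flip) (fun e f hef => htotal e f (Indep.flip hef))
      htrans h₁ h₂ (hu₁.trans hu₂.symm) (hv₁.trans hv₂.symm)

theorem exists_orientation_of_asymm (side : V → Bool) {D : V → V → Prop}
    (hD : ∀ u v, D u v → ¬ D v u) :
    ∃ O : V → V → Prop, IsOrientation side O ∧ ∀ u v, O u v → ¬ D v u := by
  classical
  refine ⟨fun u v => side u = side v ∧ u ≠ v ∧
      (D u v ∨ (¬ D v u ∧ WellOrderingRel u v)), ⟨fun u v hO => ⟨hO.1, hO.2.1⟩, ?_⟩, ?_⟩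
  · intro u v huv hs
    constructor
    · rintro ⟨-, -, hDuv | ⟨hDvu, hW⟩⟩ ⟨-, -, hDvu' | ⟨hDuv', hW'⟩⟩
      · exact hD u v hDuv hDvu'
      · exact hDuv' hDuv
      · exact hDvu hDvu'
      · exact asymm hW hW'
    · intro hO
      refine ⟨hs, huv, or_iff_not_imp_left.2 fun hDuv => ⟨fun hDvu => hO ⟨hs.symm, huv.symm,
        Or.inl hDvu⟩, ?_⟩⟩
      rcases trichotomous_of WellOrderingRel u v with hW | rfl | hW
      · exact hW
      · exact absurd rfl huv
      · exact absurd ⟨hs.symm, huv.symm, Or.inr ⟨hDuv, hW⟩⟩ hO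
  · rintro u v ⟨-, -, hDuv | ⟨hDvu, -⟩⟩
    exacts [hD u v hDuv, hDvu]

theorem stmt_5_general (G : SimpleGraph V) (side : V → Bool)
    (h : HasTransitiveOrientation (IndepGraph G side)) :
    ∃ O : V → V → Prop, IsOrientation side O ∧ TFree G side O := by
  obtain ⟨r, hr, hr_orient, htrans⟩ := h
  have htotal : ∀ e f, (IndepGraph G side).Adj e f → r e f ∨ r f e := fun e f hef =>
    or_iff_not_imp_left.2 fun h => not_not.1 (mt (hr_orient e f hef).2 h)
  obtain ⟨O, hO, hO_endRel⟩ :=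
    exists_orientation_of_asymm side fun u v => endRel_asymm hr htotal htrans (u := u) (v := v)
  refine ⟨O, hO, fun x y x' y' hsx hsy hsxy hxx' hyy' hxy hx'y' hxy' hx'y ⟨hOx, hOy⟩ => ?_⟩
  have hind : Indep G x y' x' y := ⟨hxy', hx'y, hxx', hyy'.symm, hxy, hx'y'⟩
  cases hx : side x
  · have hy : side y = true := by simpa [hx] using hsxy.symm
    rcases htotal ⟨(y', x), hxy'.symm, hsy ▸ hy⟩ ⟨(y, x'), hx'y.symm, hy⟩ hind.flip with h | h
    · exact hO_endRel y y' hOy ⟨_, _, h, Or.inl ⟨rfl, rfl⟩⟩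
    · exact hO_endRel x x' hOx ⟨_, _, h, Or.inr ⟨hsx ▸ hx, rfl, rfl⟩⟩
  · have hy : side y = false := by simpa [hx] using hsxy.symm
    rcases htotal ⟨(x, y'), hxy', hx⟩ ⟨(x', y), hx'y, hsx ▸ hx⟩ hind with h | h
    · exact hO_endRel y y' hOy ⟨_, _, h, Or.inr ⟨hsy ▸ hy, rfl, rfl⟩⟩
    · exact hO_endRel x x' hOx ⟨_, _, h, Or.inl ⟨rfl, rfl⟩⟩

/-- if `I(G)` is a comparability graph, then the complement of `G`
has a `T`-free orientation. -/
theorem stmt_5 (G : SimpleGraph V) (side : V → Bool) (hbip : IsBipartition G side)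
    (h : HasTransitiveOrientation (IndepGraph G side)) :
    ∃ O : V → V → Prop, IsOrientation side O ∧ TFree G side O :=
  stmt_5_general G side h

end CocompBigraph
end
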